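/- arXiv:2510.12281 — 4 statements merged into one kernel-verified Lean document; each statement's English description precedes it below -/
import Mathlib

section
/- Let 0 < t ≤ 1, let X and Y be metric spaces, and let f : X → Y be a homeomorphism satisfying the bi-Hölder condition K₁·d(x,y)^(1/t) ≤ d(f(x),f(y)) ≤ K₂·d(x,y)^t for all x, y ∈ X, where K₁, K₂ are positive constants. Then f is weakly (R,t²)-quasisymmetric with R = K₂/K₁^(t²). -/
open Metric Set Real

/-- A map `f` between metric spaces is *weakly (R,t)-quasisymmetric* if
`dist a x ≤ dist b x` implies `dist (f a) (f x) ≤ R * dist (f b) (f x) ^ t`. -/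
def WeaklyQS {X Y : Type*} [MetricSpace X] [MetricSpace Y] (R t : ℝ) (f : X → Y) : Prop :=
  ∀ a b x : X, dist a x ≤ dist b x → dist (f a) (f x) ≤ R * dist (f b) (f x) ^ t

/-- If `0 < t ≤ 1` and a homeomorphism `f : X → Y` between metric spaces satisfies the
bi-Hölder condition `K₁ * d(x,y)^(1/t) ≤ d(f x, f y) ≤ K₂ * d(x,y)^t` with `K₁, K₂ > 0`,
then `f` is weakly `(R, t²)`-quasisymmetric with `R = K₂ / K₁ ^ (t²)`. -/
theorem stmt0 {X Y : Type*} [MetricSpace X] [MetricSpace Y]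
    (t K₁ K₂ : ℝ) (ht : 0 < t) (ht1 : t ≤ 1) (hK₁ : 0 < K₁) (hK₂ : 0 < K₂)
    (f : X ≃ₜ Y)
    (hlow : ∀ x y : X, K₁ * dist x y ^ (1 / t) ≤ dist (f x) (f y))
    (hup : ∀ x y : X, dist (f x) (f y) ≤ K₂ * dist x y ^ t) :
    WeaklyQS (K₂ / K₁ ^ (t ^ 2)) (t ^ 2) f := by
  intro a b x hab
  set d := dist (f b) (f x) with hdd
  have h1 : dist (f a) (f x) ≤ K₂ * dist a x ^ t := hup a x
  have h2 : dist a x ^ t ≤ dist b x ^ t :=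
    Real.rpow_le_rpow dist_nonneg hab ht.le
  have h3 : dist b x ^ (1 / t) ≤ d / K₁ :=
    (le_div_iff₀' hK₁).mpr (hlow b x)
  have hd : dist b x = (dist b x ^ (1 / t)) ^ t := by
    rw [← Real.rpow_mul dist_nonneg, one_div_mul_cancel ht.ne', Real.rpow_one]
  have h4 : dist b x ≤ (d / K₁) ^ t := by
    rw [hd]
    exact Real.rpow_le_rpow (Real.rpow_nonneg dist_nonneg _) h3 ht.le
  have h5 : dist b x ^ t ≤ (d / K₁) ^ (t ^ 2) := by
    have := Real.rpow_le_rpow dist_nonneg h4 ht.le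
    rwa [← Real.rpow_mul (div_nonneg dist_nonneg hK₁.le), ← sq] at this
  have hdK : (d / K₁) ^ (t ^ 2) = d ^ (t ^ 2) / K₁ ^ (t ^ 2) :=
    Real.div_rpow dist_nonneg hK₁.le (t ^ 2)
  calc dist (f a) (f x) ≤ K₂ * dist a x ^ t := h1
    _ ≤ K₂ * dist b x ^ t := by nlinarith
    _ ≤ K₂ * (d ^ (t ^ 2) / K₁ ^ (t ^ 2)) := by
        rw [← hdK]; nlinarith
    _ = K₂ / K₁ ^ (t ^ 2) * d ^ (t ^ 2) := by ring
end

section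
/- Let 0 < t ≤ 1 and let f : 𝕋 → ℝ² be a weakly (R,t)-quasisymmetric mapping of the unit circle onto its image (a homeomorphism onto Γ := f(𝕋)). Then Γ is a t-quasicircle; more precisely, Γ satisfies the t-quasicircle condition with constant 2R. -/
open Metric Set Real

/-- A parametrization of a Jordan curve: a continuous `2π`-periodic map which is
injective on a period. -/
def IsJordanParam (p : ℝ → ℂ) : Prop :=
  Continuous p ∧ Function.Periodic p (2 * π) ∧ Set.InjOn p (Set.Ico 0 (2 * π))

/-- A set `Γ ⊆ ℂ` is a Jordan curve if it is the range of some Jordan parametrization. -/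
def IsJordanCurve (Γ : Set ℂ) : Prop :=
  ∃ p : ℝ → ℂ, IsJordanParam p ∧ Set.range p = Γ

/-- `A` is a subarc of the Jordan curve `Γ` joining `x` and `y`. -/
def IsSubarc (Γ : Set ℂ) (x y : ℂ) (A : Set ℂ) : Prop :=
  ∃ p : ℝ → ℂ, IsJordanParam p ∧ Set.range p = Γ ∧
    ∃ a b : ℝ, a ≤ b ∧ b ≤ a + 2 * π ∧ p a = x ∧ p b = y ∧ A = p '' Set.Icc a b

/-- `Γ` satisfies the `t`-quasicircle condition with constant `C`: the smaller subarc
joining any `x, y ∈ Γ` has diameter at most `C * |x - y| ^ t`. -/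
def TQuasicircleCond (t C : ℝ) (Γ : Set ℂ) : Prop :=
  ∀ x ∈ Γ, ∀ y ∈ Γ, ∃ A : Set ℂ, IsSubarc Γ x y A ∧ Metric.diam A ≤ C * dist x y ^ t

/-- `Γ` is a `t`-quasicircle. -/
def IsTQuasicircle (t : ℝ) (Γ : Set ℂ) : Prop :=
  IsJordanCurve Γ ∧ ∃ C : ℝ, 1 ≤ C ∧ TQuasicircleCond t C Γ

noncomputable def sC (θ : ℝ) : Metric.sphere (0 : ℂ) 1 :=
  ⟨Complex.exp (θ * Complex.I), by
    simp [Metric.mem_sphere, Complex.dist_eq, Complex.norm_exp_ofReal_mul_I]⟩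

lemma sC_surj : Function.Surjective sC := by
  rintro ⟨z, hz⟩
  refine ⟨Complex.arg z, ?_⟩
  have h1 : ‖z‖ = 1 := by
    simpa [Metric.mem_sphere, Complex.dist_eq] using hz
  have := Complex.norm_mul_exp_arg_mul_I z
  rw [h1] at this
  exact Subtype.ext (by simpa [sC] using this)

lemma sC_cont : Continuous sC :=
  Continuous.subtype_mk (Complex.continuous_exp.comp
    (Complex.continuous_ofReal.mul continuous_const)) _

lemma exp_I_eq_iff (x y : ℝ) :
    Complex.exp (x * Complex.I) = Complex.exp (y * Complex.I) ↔
      ∃ n : ℤ, y = x + n * (2 * π) := by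
  rw [Complex.exp_eq_exp_iff_exists_int]
  constructor
  · rintro ⟨n, h⟩
    refine ⟨-n, ?_⟩
    have h2 : (x : ℂ) * Complex.I = ((y + n * (2 * π) : ℝ) : ℂ) * Complex.I := by
      push_cast; linear_combination h
    have h3 : (x : ℝ) = y + n * (2 * π) := by
      exact_mod_cast mul_right_cancel₀ Complex.I_ne_zero h2
    push_cast
    linarith
  · rintro ⟨n, h⟩
    refine ⟨-n, ?_⟩
    rw [h]; push_cast; ring

lemma sC_eq_iff (x y : ℝ) : sC x = sC y ↔ ∃ n : ℤ, y = x + n * (2 * π) := by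
  rw [← exp_I_eq_iff]
  exact ⟨fun h => congrArg Subtype.val h, fun h => Subtype.ext h⟩

lemma chordC (x y : ℝ) : dist (sC x) (sC y) = 2 * |Real.sin ((x - y) / 2)| := by
  rw [Subtype.dist_eq]
  show dist (Complex.exp (x * Complex.I)) (Complex.exp (y * Complex.I)) = _
  rw [Complex.dist_eq]
  have h1 : Complex.exp (x * Complex.I) - Complex.exp (y * Complex.I) =
      Complex.exp ((((x + y) / 2 : ℝ) : ℂ) * Complex.I) *
        ((2 * Real.sin ((x - y) / 2) : ℝ) * Complex.I) := by
    have e1 : (x : ℂ) * Complex.I =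
        (((x + y) / 2 : ℝ) : ℂ) * Complex.I + (((x - y) / 2 : ℝ) : ℂ) * Complex.I := by
      push_cast; ring
    have e2 : (y : ℂ) * Complex.I =
        (((x + y) / 2 : ℝ) : ℂ) * Complex.I + ((-((x - y) / 2) : ℝ) : ℂ) * Complex.I := by
      push_cast; ring
    rw [e1, e2, Complex.exp_add, Complex.exp_add, ← mul_sub]
    congr 1
    rw [Complex.exp_mul_I, Complex.exp_mul_I]
    push_cast
    rw [Complex.cos_neg, Complex.sin_neg]
    ring
  rw [h1, norm_mul, Complex.norm_exp_ofReal_mul_I, one_mul, norm_mul, Complex.norm_I,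
    mul_one, Complex.norm_real, Real.norm_eq_abs, abs_mul]
  norm_num

lemma sin_half_mono {u v : ℝ} (hu : 0 ≤ u) (huv : u ≤ v) (hv : v ≤ π) :
    |Real.sin (u / 2)| ≤ |Real.sin (v / 2)| := by
  have hπ := Real.pi_pos
  rw [abs_of_nonneg (Real.sin_nonneg_of_nonneg_of_le_pi (by linarith) (by linarith)),
    abs_of_nonneg (Real.sin_nonneg_of_nonneg_of_le_pi (by linarith) (by linarith))]
  exact Real.strictMonoOn_sin.monotoneOn ⟨by linarith, by linarith⟩
    ⟨by linarith, by linarith⟩ (by linarith)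

lemma master (t R : ℝ) (hR : 0 < R)
    (f : Metric.sphere (0 : ℂ) 1 → ℂ) (hfc : Continuous f) (hfi : Function.Injective f)
    (hqs : WeaklyQS R t f) (c : ℝ) (hc : c = 1 ∨ c = -1)
    (a b : ℝ) (hab : a ≤ b) (hba : b - a ≤ π) :
    IsSubarc (Set.range f) (f (sC (c * a))) (f (sC (c * b)))
      ((fun θ => f (sC (c * θ))) '' Set.Icc a b) ∧
    Metric.diam ((fun θ => f (sC (c * θ))) '' Set.Icc a b) ≤
      2 * R * dist (f (sC (c * a))) (f (sC (c * b))) ^ t := by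
  have hπ := Real.pi_pos
  set p : ℝ → ℂ := fun θ => f (sC (c * θ)) with hp
  have hc2 : c * c = 1 := by rcases hc with rfl | rfl <;> norm_num
  -- chord with orientation
  have chord' : ∀ x y : ℝ, dist (sC (c * x)) (sC (c * y)) = 2 * |Real.sin ((x - y) / 2)| := by
    intro x y
    rw [chordC]
    rcases hc with rfl | rfl
    · norm_num
    · have : (-1 * x - -1 * y) / 2 = -((x - y) / 2) := by ring
      rw [this, Real.sin_neg, abs_neg]
  constructor
  · -- subarc structure
    refine ⟨p, ⟨?_, ?_, ?_⟩, ?_, a, b, hab, by linarith, rfl, rfl, rfl⟩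
    · exact hfc.comp (sC_cont.comp (continuous_const.mul continuous_id))
    · intro θ
      have : sC (c * (θ + 2 * π)) = sC (c * θ) := by
        rw [sC_eq_iff]
        rcases hc with rfl | rfl
        · exact ⟨-1, by push_cast; ring⟩
        · exact ⟨1, by push_cast; ring⟩
      simp only [hp, this]
    · intro θ₁ h₁ θ₂ h₂ h
      have hs : sC (c * θ₁) = sC (c * θ₂) := hfi h
      rw [sC_eq_iff] at hs
      obtain ⟨n, hn⟩ := hs
      have hn' : θ₂ - θ₁ = c * n * (2 * π) := by
        rcases hc with rfl | rfl <;> nlinarith [hn]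
      have hb1 : (-1 : ℝ) < c * n := by nlinarith [h₁.1, h₁.2, h₂.1, h₂.2]
      have hb2 : (c : ℝ) * n < 1 := by nlinarith [h₁.1, h₁.2, h₂.1, h₂.2]
      have hcn : c * (n : ℝ) = 0 := by
        rcases hc with rfl | rfl
        · have l1 : (-1 : ℤ) < n := by exact_mod_cast (by linarith [hb1] : (-1:ℝ) < (n:ℝ))
          have l2 : n < (1 : ℤ) := by exact_mod_cast (by linarith [hb2] : ((n:ℝ)) < 1)
          have : n = 0 := by omega
          simp [this]
        · have l1 : (-1 : ℤ) < -n := by exact_mod_cast (by linarith [hb1] : (-1:ℝ) < -(n:ℝ))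
          have l2 : -n < (1 : ℤ) := by exact_mod_cast (by linarith [hb2] : (-(n:ℝ)) < 1)
          have : n = 0 := by omega
          simp [this]
      have : θ₂ - θ₁ = 0 := by rw [hn', hcn]; ring
      linarith
    · -- range
      ext z
      constructor
      · rintro ⟨θ, rfl⟩; exact ⟨_, rfl⟩
      · rintro ⟨w, rfl⟩
        obtain ⟨θ, rfl⟩ := sC_surj w
        exact ⟨c * θ, by simp only [hp]; rw [← mul_assoc, hc2, one_mul]⟩
  · -- diameter bound
    have key : ∀ θ ∈ Set.Icc a b, dist (p θ) (p a) ≤ R * dist (p b) (p a) ^ t := by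
      intro θ hθ
      refine hqs _ _ _ ?_
      rw [chord' θ a, chord' b a]
      have := sin_half_mono (u := θ - a) (v := b - a) (by linarith [hθ.1])
        (by linarith [hθ.2]) hba
      linarith
    have hnn : 0 ≤ R * dist (p b) (p a) ^ t := by positivity
    refine Metric.diam_le_of_forall_dist_le (by positivity) ?_
    rintro z₁ ⟨θ₁, hθ₁, rfl⟩ z₂ ⟨θ₂, hθ₂, rfl⟩
    have h1 := key θ₁ hθ₁
    have h2 := key θ₂ hθ₂
    have htri : dist (p θ₁) (p θ₂) ≤ dist (p θ₁) (p a) + dist (p θ₂) (p a) :=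
      dist_triangle_right _ _ _
    have hcomm : dist (f (sC (c * a))) (f (sC (c * b))) = dist (p b) (p a) := dist_comm _ _
    rw [hcomm]
    linarith

/-- If `f : 𝕋 → ℝ²` is a weakly `(R,t)`-quasisymmetric homeomorphism onto its image
`Γ := f(𝕋)`, then `Γ` is a `t`-quasicircle; more precisely `Γ` satisfies the
`t`-quasicircle condition with constant `2R`. -/
theorem stmt1 (t R : ℝ) (ht : 0 < t) (ht1 : t ≤ 1) (hR : 0 < R)
    (f : Metric.sphere (0 : ℂ) 1 → ℂ) (hfc : Continuous f) (hfi : Function.Injective f)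
    (hqs : WeaklyQS R t f) :
    IsTQuasicircle t (Set.range f) ∧ TQuasicircleCond t (2 * R) (Set.range f) := by
  have hπ := Real.pi_pos
  have cond : TQuasicircleCond t (2 * R) (Set.range f) := by
    rintro x ⟨u, rfl⟩ y ⟨v, rfl⟩
    obtain ⟨α, rfl⟩ := sC_surj u
    obtain ⟨β, rfl⟩ := sC_surj v
    set m : ℝ := (β - α) - 2 * π * ⌊(β - α) / (2 * π)⌋ with hm
    have h2π : (0 : ℝ) < 2 * π := by linarith
    have hm0 : 0 ≤ m := by
      have h := (le_div_iff₀ h2π).mp (Int.floor_le ((β - α) / (2 * π)))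
      rw [hm]; linarith
    have hm2 : m < 2 * π := by
      have h := (div_lt_iff₀ h2π).mp (Int.lt_floor_add_one ((β - α) / (2 * π)))
      rw [hm]; push_cast at h; linarith
    have hβm : sC (α + m) = sC β := by
      rw [sC_eq_iff]
      exact ⟨⌊(β - α) / (2 * π)⌋, by rw [hm]; ring⟩
    rcases le_or_gt m π with hcase | hcase
    · have M := master t R hR f hfc hfi hqs 1 (Or.inl rfl) α (α + m)
        (by linarith) (by linarith)
      simp only [one_mul] at M
      rw [hβm] at M
      exact ⟨_, M.1, M.2⟩
    · have M := master t R hR f hfc hfi hqs (-1) (Or.inr rfl) (-α) (-α + (2 * π - m))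
        (by linarith) (by linarith)
      have e1 : (-1 : ℝ) * -α = α := by ring
      have e2 : sC ((-1 : ℝ) * (-α + (2 * π - m))) = sC β := by
        rw [← hβm, sC_eq_iff]
        exact ⟨1, by push_cast; linarith⟩
      rw [e1, e2] at M
      exact ⟨_, M.1, M.2⟩
  have hjc : IsJordanCurve (Set.range f) := by
    obtain ⟨A, ⟨p, hp, hr, _⟩, _⟩ :=
      cond (f (sC 0)) ⟨_, rfl⟩ (f (sC 0)) ⟨_, rfl⟩
    exact ⟨p, hp, hr⟩
  refine ⟨⟨hjc, max 1 (2 * R), le_max_left _ _, ?_⟩, cond⟩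
  intro x hx y hy
  obtain ⟨A, h1, h2⟩ := cond x hx y hy
  exact ⟨A, h1, h2.trans (mul_le_mul_of_nonneg_right (le_max_right _ _)
    (Real.rpow_nonneg dist_nonneg t))⟩
end

section
/- Let 0 < t ≤ 1, let Λ ⊂ ℝ² be a quasicircle (a 1-quasicircle), and let f : Λ → ℝ² be a (ρ,t)-quasisymmetric homeomorphism onto its image L := f(Λ). Then L is a t-quasicircle. In particular, L is a quasicircle when t = 1. -/
open Metric Set Real

/-- A map `f` between metric spaces is *(ρ,t)-quasisymmetric* if for all `k ≥ 0`,
`dist a x ≤ k * dist b x` implies `dist (f a) (f x) ≤ ρ k * dist (f b) (f x) ^ t`. -/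
def QS {X Y : Type*} [MetricSpace X] [MetricSpace Y] (ρ : ℝ → ℝ) (t : ℝ) (f : X → Y) : Prop :=
  ∀ (a b x : X) (k : ℝ), 0 ≤ k → dist a x ≤ k * dist b x →
    dist (f a) (f x) ≤ ρ k * dist (f b) (f x) ^ t

lemma lift_param {Λ : Set ℂ} (f : Λ → ℂ) (hfc : Continuous f) (hfi : Function.Injective f)
    (p : ℝ → ℂ) (hp : IsJordanParam p) (hrange : Set.range p = Λ) :
    ∃ q : ℝ → ℂ, IsJordanParam q ∧ Set.range q = Set.range f ∧
      ∀ r, q r = f ⟨p r, hrange ▸ Set.mem_range_self r⟩ := by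
  have hmem : ∀ r, p r ∈ Λ := fun r => hrange ▸ Set.mem_range_self r
  refine ⟨fun r => f ⟨p r, hmem r⟩, ⟨?_, ?_, ?_⟩, ?_, fun r => rfl⟩
  · exact hfc.comp (Continuous.subtype_mk hp.1 hmem)
  · intro r
    simp only
    congr 1
    exact Subtype.ext (hp.2.1 r)
  · intro s1 h1 s2 h2 h
    exact hp.2.2 h1 h2 (congrArg Subtype.val (hfi h))
  · ext z
    constructor
    · rintro ⟨r, rfl⟩; exact ⟨_, rfl⟩
    · rintro ⟨w, rfl⟩
      obtain ⟨r, hr⟩ : w.1 ∈ Set.range p := hrange.symm ▸ w.2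
      exact ⟨r, congrArg f (Subtype.ext hr)⟩

/-- If `Λ ⊂ ℝ²` is a quasicircle (a 1-quasicircle) and `f : Λ → ℝ²` is a
`(ρ,t)`-quasisymmetric homeomorphism onto its image `L := f(Λ)`, then
`L` is a `t`-quasicircle (in particular, a quasicircle when `t = 1`). -/
theorem stmt2 (t : ℝ) (ht : 0 < t) (ht1 : t ≤ 1) (Λ : Set ℂ)
    (hΛ : IsTQuasicircle 1 Λ) (ρ : ℝ → ℝ)
    (hρmono : StrictMonoOn ρ (Set.Ici 0)) (hρcont : ContinuousOn ρ (Set.Ici 0))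
    (hρnonneg : ∀ k : ℝ, 0 ≤ k → 0 ≤ ρ k)
    (f : Λ → ℂ) (hfc : Continuous f) (hfi : Function.Injective f)
    (hqs : QS ρ t f) :
    IsTQuasicircle t (Set.range f) := by
  obtain ⟨hJ, C, hC1, hcond⟩ := hΛ
  have hC0 : (0:ℝ) ≤ C := le_trans zero_le_one hC1
  have hρC : 0 ≤ ρ C := hρnonneg C hC0
  constructor
  · obtain ⟨p, hp, hrange⟩ := hJ
    obtain ⟨q, hq, hqr, -⟩ := lift_param f hfc hfi p hp hrange
    exact ⟨q, hq, hqr⟩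
  · refine ⟨2 * ρ C + 1, by linarith, ?_⟩
    rintro x' ⟨x, rfl⟩ y' ⟨y, rfl⟩
    obtain ⟨A, ⟨p, hp, hrange, a, b, hab, hb2, hpa, hpb, hA⟩, hdiam⟩ :=
      hcond x.1 x.2 y.1 y.2
    have hdiam' : Metric.diam A ≤ C * dist x.1 y.1 := by
      rwa [Real.rpow_one] at hdiam
    obtain ⟨q, hq, hqr, hqdef⟩ := lift_param f hfc hfi p hp hrange
    have hqa : q a = f x := by rw [hqdef]; exact congrArg f (Subtype.ext hpa)
    have hqb : q b = f y := by rw [hqdef]; exact congrArg f (Subtype.ext hpb)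
    have hAbd : Bornology.IsBounded A := by
      rw [hA]; exact ((isCompact_Icc.image hp.1)).isBounded
    have hxA : x.1 ∈ A := by rw [hA]; exact ⟨a, ⟨le_refl a, hab⟩, hpa⟩
    have hDnn : 0 ≤ dist (f x) (f y) ^ t := Real.rpow_nonneg dist_nonneg t
    -- key estimate for points on the arc
    have key : ∀ s ∈ Set.Icc a b, dist (q s) (f x) ≤ ρ C * dist (f x) (f y) ^ t := by
      intro s hs
      set U : Λ := ⟨p s, hrange ▸ Set.mem_range_self s⟩ with hU
      have hsA : p s ∈ A := by rw [hA]; exact ⟨s, hs, rfl⟩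
      have h1 : dist (p s) x.1 ≤ C * dist x.1 y.1 :=
        le_trans (Metric.dist_le_diam_of_mem hAbd hsA hxA) hdiam'
      have h2 : dist U x ≤ C * dist y x := by
        rw [Subtype.dist_eq, Subtype.dist_eq, dist_comm (y:ℂ) (x:ℂ)]
        exact h1
      have h3 := hqs U y x C hC0 h2
      rw [hqdef, ← hU]
      calc dist (f U) (f x) ≤ ρ C * dist (f y) (f x) ^ t := h3
        _ = ρ C * dist (f x) (f y) ^ t := by rw [dist_comm]
    refine ⟨q '' Set.Icc a b, ⟨q, hq, hqr, a, b, hab, hb2, hqa, hqb, rfl⟩, ?_⟩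
    have : Metric.diam (q '' Set.Icc a b) ≤ 2 * ρ C * dist (f x) (f y) ^ t := by
      apply Metric.diam_le_of_forall_dist_le (by positivity)
      rintro u' ⟨s1, hs1, rfl⟩ v' ⟨s2, hs2, rfl⟩
      calc dist (q s1) (q s2) ≤ dist (q s1) (f x) + dist (f x) (q s2) := dist_triangle _ _ _
        _ ≤ ρ C * dist (f x) (f y) ^ t + ρ C * dist (f x) (f y) ^ t := by
            refine add_le_add (key s1 hs1) ?_
            rw [dist_comm]; exact key s2 hs2
        _ = 2 * ρ C * dist (f x) (f y) ^ t := by ring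
    refine le_trans this ?_
    nlinarith [hDnn, hρC]
end

section
/- For every r with 1/2 < r < 1, the number δ := (1 − sin(π(1−r)))/cos(π(1−r)) satisfies 0 ≤ δ < r and (r−δ)/(1−rδ) ≤ (π−1)/(π+1); consequently the hyperbolic distance in the unit disk between the points r and δ on the real axis satisfies λ_𝔻(r, δ) = (1/2)·log((1 + (r−δ)/(1−rδ))/(1 − (r−δ)/(1−rδ))) ≤ (1/2)·log π. -/
open Real

set_option maxHeartbeats 1000000 in
private lemma stmt8_poly (w p : ℝ) (hw0 : 0 < w) (hw1 : w ≤ 0.3927)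
    (hp1 : 3.141592 < p) (hp2 : p < 3.141593) :
    (p - 2*w) * ((w - 7*w^3/48) * (1 - 0.49*w^2)) ≤ p * w * (1 - 2*(w - 7*w^3/48)^2) := by
  have hpw : p * w ≤ 3.141593 * 0.3927 :=
    mul_le_mul hp2.le hw1 hw0.le (by norm_num)
  have hw2 : w^2 ≤ 0.3927^2 := by nlinarith
  have hw4 : w^4 ≤ 0.3927^4 := by nlinarith
  have h1 : p * w^3 ≤ 3.141593 * 0.3927 * w^2 := by
    nlinarith [mul_le_mul_of_nonneg_left hpw (sq_nonneg w)]
  have h2 : w^4 ≤ 0.3927^2 * w^2 := by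
    nlinarith [mul_le_mul_of_nonneg_left hw2 (sq_nonneg w)]
  have h3 : p * w^7 ≤ 3.141593 * 0.3927^5 * w^2 := by
    have := mul_le_mul hpw hw4 (by positivity) (by norm_num)
    nlinarith [mul_le_mul_of_nonneg_left this (sq_nonneg w)]
  have h4 : (0:ℝ) ≤ p * w^5 := by positivity
  have h5 : (0:ℝ) ≤ w^6 := by positivity
  nlinarith [h1, h2, h3, h4, h5, sq_nonneg w]

set_option maxHeartbeats 1000000 in
private lemma stmt8_key (v : ℝ) (hv0 : 0 < v) (hv : v ≤ π / 4) :
    (π - v) * Real.sin v ≤ π * v * Real.cos v := by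
  have hπ1 := Real.pi_gt_d6
  have hπ2 := Real.pi_lt_d6
  obtain ⟨w, hwdef⟩ : ∃ w, v / 2 = w := ⟨_, rfl⟩
  have hw0 : 0 < w := by linarith
  have hw1 : w ≤ 0.3927 := by linarith
  have hwa : |w| ≤ 1 := by rw [abs_of_pos hw0]; linarith
  have hsb := abs_sub_le_iff.1 (Real.sin_bound hwa)
  have hcb := abs_sub_le_iff.1 (Real.cos_bound hwa)
  rw [abs_of_pos hw0] at hsb hcb
  obtain ⟨s, hsd⟩ : ∃ s, Real.sin w = s := ⟨_, rfl⟩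
  obtain ⟨c, hcd⟩ : ∃ c, Real.cos w = c := ⟨_, rfl⟩
  rw [hsd] at hsb
  rw [hcd] at hcb
  have hs0 : 0 ≤ s := by
    rw [← hsd]
    exact Real.sin_nonneg_of_nonneg_of_le_pi hw0.le (by nlinarith)
  have hc0 : 0 ≤ c := by rw [← hcd]; exact (Real.cos_pos_of_le_one hwa).le
  have hsA : s ≤ w - 7*w^3/48 := by nlinarith [hsb.1]
  have hcB : c ≤ 1 - 0.49*w^2 := by nlinarith [hcb.1]
  have hA0 : (0:ℝ) ≤ w - 7*w^3/48 := by nlinarith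
  have hsc : s * c ≤ (w - 7*w^3/48) * (1 - 0.49*w^2) := mul_le_mul hsA hcB hc0 hA0
  have hs2 : s ^ 2 ≤ (w - 7*w^3/48) ^ 2 := by
    have := pow_le_pow_left₀ hs0 hsA 2
    exact this
  have hpoly := stmt8_poly w π hw0 hw1 hπ1 hπ2
  rw [show v = 2 * w by linarith, Real.sin_two_mul, Real.cos_two_mul', hsd, hcd]
  have hsq : s ^ 2 + c ^ 2 = 1 := by
    rw [← hsd, ← hcd]; exact Real.sin_sq_add_cos_sq w
  have hgoal : c ^ 2 - s ^ 2 = 1 - 2 * s ^ 2 := by linarith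
  rw [hgoal]
  nlinarith [hsc, hs2, hpoly, hw0.le, mul_pos Real.pi_pos hw0]

set_option maxHeartbeats 1000000 in
/-- For `1/2 < r < 1`, the number `δ = (1 − sin(π(1−r)))/cos(π(1−r))` satisfies
`0 ≤ δ < r` and `(r−δ)/(1−rδ) ≤ (π−1)/(π+1)`; consequently the hyperbolic distance in
the unit disk between the real points `r` and `δ` satisfies
`(1/2)·log((1+(r−δ)/(1−rδ))/(1−(r−δ)/(1−rδ))) ≤ (1/2)·log π`. -/
theorem stmt8 (r : ℝ) (hr1 : 1 / 2 < r) (hr2 : r < 1) :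
    0 ≤ (1 - Real.sin (π * (1 - r))) / Real.cos (π * (1 - r)) ∧
    (1 - Real.sin (π * (1 - r))) / Real.cos (π * (1 - r)) < r ∧
    (r - (1 - Real.sin (π * (1 - r))) / Real.cos (π * (1 - r))) /
        (1 - r * ((1 - Real.sin (π * (1 - r))) / Real.cos (π * (1 - r)))) ≤
      (π - 1) / (π + 1) ∧
    (1 / 2) * Real.log
        ((1 + (r - (1 - Real.sin (π * (1 - r))) / Real.cos (π * (1 - r))) /
            (1 - r * ((1 - Real.sin (π * (1 - r))) / Real.cos (π * (1 - r))))) /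
          (1 - (r - (1 - Real.sin (π * (1 - r))) / Real.cos (π * (1 - r))) /
            (1 - r * ((1 - Real.sin (π * (1 - r))) / Real.cos (π * (1 - r)))))) ≤
      (1 / 2) * Real.log π := by
  have hπ := Real.pi_pos
  have hπ3 : (3:ℝ) < π := Real.pi_gt_three
  obtain ⟨v, hvdef⟩ : ∃ v, π * (1 - r) / 2 = v := ⟨_, rfl⟩
  have h1r : (0:ℝ) < 1 - r := by linarith
  have hv0 : 0 < v := by nlinarith [mul_pos hπ h1r]
  have hv4 : v < π / 4 := by nlinarith [mul_lt_mul_of_pos_left (show 1 - r < 1/2 by linarith) hπ]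
  have h2v : π * (1 - r) = 2 * v := by linarith
  have hrπ : r * π = π - 2 * v := by nlinarith [h2v]
  obtain ⟨s, hsd⟩ : ∃ s, Real.sin v = s := ⟨_, rfl⟩
  obtain ⟨c, hcd⟩ : ∃ c, Real.cos v = c := ⟨_, rfl⟩
  have hs : 0 < s := by
    rw [← hsd]; exact Real.sin_pos_of_pos_of_lt_pi hv0 (by linarith)
  have hc : 0 < c := by
    rw [← hcd]; exact Real.cos_pos_of_mem_Ioo ⟨by linarith, by linarith⟩
  have hsq : s ^ 2 + c ^ 2 = 1 := by
    rw [← hsd, ← hcd]; exact Real.sin_sq_add_cos_sq v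
  have hcs : s < c := by
    rw [← hsd, ← hcd, ← Real.cos_pi_div_two_sub v]
    exact Real.cos_lt_cos_of_nonneg_of_le_pi hv0.le (by linarith) (by linarith)
  have hcspos : 0 < c + s := by linarith
  have htan : v * c < s := by
    have h := Real.lt_tan hv0 (by linarith)
    rw [Real.tan_eq_sin_div_cos, hsd, hcd] at h
    exact (lt_div_iff₀ hc).mp h
  have hkey : (π - v) * s ≤ π * v * c := by
    rw [← hsd, ← hcd]; exact stmt8_key v hv0 (by linarith)
  rw [h2v, Real.sin_two_mul, Real.cos_two_mul', hsd, hcd]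
  have hδ : (1 - 2 * s * c) / (c ^ 2 - s ^ 2) = (c - s) / (c + s) := by
    rw [show (1:ℝ) - 2 * s * c = (c - s) * (c - s) by nlinarith,
      show c ^ 2 - s ^ 2 = (c - s) * (c + s) by ring,
      mul_div_mul_left _ _ (sub_ne_zero_of_ne hcs.ne')]
  rw [hδ]
  -- claim 1
  have claim1 : 0 ≤ (c - s) / (c + s) := div_nonneg (by linarith) hcspos.le
  -- claim 2
  have claim2 : (c - s) / (c + s) < r := by
    rw [div_lt_iff₀ hcspos]
    nlinarith [htan, hrπ, mul_pos hs (show 0 < π - 1 - v by linarith), hcspos, hπ,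
      mul_pos hπ hcspos]
  -- denominator positivity
  have hdlt1 : (c - s) / (c + s) < 1 := by
    rw [div_lt_one hcspos]; linarith
  have hden : 0 < 1 - r * ((c - s) / (c + s)) := by
    have h := mul_le_of_le_one_left claim1 hr2.le
    linarith
  -- key algebraic identity
  have hr' : r = (π - 2 * v) / π := by
    rw [eq_div_iff hπ.ne']; linarith [hrπ]
  have hnum : r - (c - s) / (c + s) = (π * s - v * c - v * s) * (2 / (π * (c + s))) := by
    rw [hr']; field_simp; ring
  have hden2 : 1 - r * ((c - s) / (c + s)) =
      (π * s + v * c - v * s) * (2 / (π * (c + s))) := by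
    rw [hr']; field_simp; ring
  have hfac : (2 / (π * (c + s))) ≠ 0 := by positivity
  have hx : (r - (c - s) / (c + s)) / (1 - r * ((c - s) / (c + s))) =
      (π * s - v * c - v * s) / (π * s + v * c - v * s) := by
    rw [hnum, hden2, mul_div_mul_right _ _ hfac]
  have hxden : 0 < π * s + v * c - v * s := by
    nlinarith [mul_pos hv0 hc, mul_pos hs (show 0 < π - v by linarith)]
  -- claim 3
  have claim3 : (r - (c - s) / (c + s)) / (1 - r * ((c - s) / (c + s))) ≤ (π - 1) / (π + 1) := by
    rw [hx, div_le_div_iff₀ hxden (by linarith)]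
    nlinarith [hkey]
  refine ⟨claim1, claim2, claim3, ?_⟩
  -- claim 4
  obtain ⟨x, hxd⟩ : ∃ x, (r - (c - s) / (c + s)) / (1 - r * ((c - s) / (c + s))) = x := ⟨_, rfl⟩
  rw [hxd] at claim3 ⊢
  have hx0 : 0 ≤ x := by
    rw [← hxd]; exact div_nonneg (by linarith [claim2]) hden.le
  have hx1 : x * (π + 1) ≤ π - 1 := (le_div_iff₀ (by linarith)).mp claim3
  have hxlt1 : x < 1 := by nlinarith
  have hfrac : (1 + x) / (1 - x) ≤ π := by
    rw [div_le_iff₀ (by linarith)]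
    nlinarith
  have hfracpos : 0 < (1 + x) / (1 - x) := div_pos (by linarith) (by linarith)
  have hlog : Real.log ((1 + x) / (1 - x)) ≤ Real.log π :=
    Real.log_le_log hfracpos hfrac
  linarith
end
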